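/- arXiv:2407.04761 — 4 statements merged into one kernel-verified Lean document; each statement's English description precedes it below -/
import Mathlib

section
/- Let A : [0,T] → [0,T] be monotone nondecreasing and let h ∈ L¹([0,T]) be such that the pushforward measure of h·σ under A is absolutely continuous with respect to Lebesgue measure σ. Then for every Borel set 𝔗 ⊆ [0,T], h = 0 almost everywhere on A⁻¹(A(𝔗)) \ 𝔗. -/
open MeasureTheory Set

/-- Let `A : [0,T] → [0,T]` be monotone nondecreasing and `h ∈ L¹([0,T])`
be such that the pushforward of `h·σ` under `A` is absolutely continuous with respect to
Lebesgue measure (i.e. `h` vanishes a.e. on the preimage of every null set).  Then for every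
Borel set `𝔗 ⊆ [0,T]`, `h = 0` almost everywhere on `A⁻¹(A(𝔗)) \ 𝔗`. -/
theorem ae_zero_on_preimage_image_diff (T : ℝ) (hT : 0 < T) (A h : ℝ → ℝ)
    (hmono : MonotoneOn A (Set.Icc 0 T))
    (hmaps : Set.MapsTo A (Set.Icc 0 T) (Set.Icc 0 T))
    (hAmeas : Measurable A)
    (hint : IntegrableOn h (Set.Icc 0 T))
    (hac : ∀ N : Set ℝ, MeasurableSet N → volume N = 0 →
      ∀ᵐ t ∂(volume.restrict (Set.Icc (0:ℝ) T)), t ∈ A ⁻¹' N → h t = 0) :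
    ∀ S : Set ℝ, MeasurableSet S → S ⊆ Set.Icc 0 T →
      ∀ᵐ t ∂(volume.restrict (Set.Icc (0:ℝ) T)),
        t ∈ (A ⁻¹' (A '' S)) \ S → h t = 0 := by
  intro S hSmeas hSsub
  -- The set of "multiple" values of A on [0,T]
  set N : Set ℝ := {y | ∃ s ∈ Set.Icc (0:ℝ) T, ∃ t ∈ Set.Icc (0:ℝ) T,
    s < t ∧ A s = y ∧ A t = y} with hN
  -- N is countable: every y ∈ N is the value of A at a rational point
  have hNc : N.Countable := by
    have hsub : N ⊆ A '' (Set.range ((↑) : ℚ → ℝ)) := by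
      rintro y ⟨s, hs, t, ht, hst, hAs, hAt⟩
      obtain ⟨q, hq1, hq2⟩ := exists_rat_btwn hst
      refine ⟨(q : ℝ), ⟨q, rfl⟩, ?_⟩
      have hqmem : (q : ℝ) ∈ Set.Icc (0:ℝ) T :=
        ⟨le_trans hs.1 hq1.le, le_trans hq2.le ht.2⟩
      have h1 : A s ≤ A q := hmono hs hqmem hq1.le
      have h2 : A q ≤ A t := hmono hqmem ht hq2.le
      rw [hAs] at h1; rw [hAt] at h2
      exact le_antisymm h2 h1
    exact ((Set.countable_range _).image A).mono hsub
  have hNmeas : MeasurableSet N := hNc.measurableSet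
  have hNnull : volume N = 0 := hNc.measure_zero _
  filter_upwards [hac N hNmeas hNnull, ae_restrict_mem measurableSet_Icc]
    with t h0 htI hmem
  apply h0
  obtain ⟨⟨s, hsS, hAs⟩, htS⟩ := hmem
  have hsI : s ∈ Set.Icc (0:ℝ) T := hSsub hsS
  have hst : s ≠ t := fun h => htS (h ▸ hsS)
  rcases lt_or_gt_of_ne hst with h | h
  · exact ⟨s, hsI, t, htI, h, hAs, rfl⟩
  · exact ⟨t, htI, s, hsI, h, rfl, hAs⟩
end

section
/- Let G = (V,E) be a finite directed graph, T > 0, and for each edge e let T_e : [0,T] → [0,T] satisfy T_e(t) ≥ t for all t. Let g = (g_e)_{e∈E} with g_e ∈ L¹([0,T]) nonnegative. For each node v define the signed measure ∇_v g = Σ_{e∈δ⁺(v)} g_e·σ − Σ_{e∈δ⁻(v)} (g_e·σ)∘T_e⁻¹. Suppose ∇_v g = 0 for all v ≠ d and ∇_d g(𝔗) ≤ 0 for all Borel sets 𝔗. Then ∇_d g = 0, and moreover g_e = 0 σ-a.e. on the set {t : T_e(t) > t}, for every edge e. -/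
open MeasureTheory Set

/-- The node balance `∇_v g (S)` of an edge flow `g` on a Borel set `S`:
cumulative inflow into edges leaving `v` minus cumulative outflow from edges entering
`v` during `S`, with respect to the exit-time maps `Te`. -/
noncomputable def nodeBalance {V E : Type} [Fintype E] [DecidableEq V]
    (T : ℝ) (src tgt : E → V) (Te : E → ℝ → ℝ) (g : E → ℝ → ℝ)
    (v : V) (S : Set ℝ) : ℝ :=
  (∑ e : E, if src e = v then
      ∫ t in S, g e t ∂(volume.restrict (Set.Icc (0:ℝ) T)) else 0)
  - (∑ e : E, if tgt e = v then
      ∫ t in Te e ⁻¹' S, g e t ∂(volume.restrict (Set.Icc (0:ℝ) T)) else 0)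

set_option maxHeartbeats 1000000 in
/-- If a nonnegative edge flow `g` satisfies flow conservation at every
node `v ≠ d` and has nonpositive node balance at `d`, then the balance at `d` vanishes,
and `g_e = 0` a.e. on `{t : T_e(t) > t}` for every edge `e`. -/
theorem flow_conservation_forces_circulation {V E : Type} [Fintype V] [Fintype E]
    [DecidableEq V]
    (T : ℝ) (hT : 0 < T) (src tgt : E → V) (d : V)
    (Te : E → ℝ → ℝ) (g : E → ℝ → ℝ)
    (hTe_meas : ∀ e, Measurable (Te e))
    (hTe_maps : ∀ e, Set.MapsTo (Te e) (Set.Icc 0 T) (Set.Icc 0 T))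
    (hTe_ge : ∀ e t, t ≤ Te e t)
    (hg_int : ∀ e, IntegrableOn (g e) (Set.Icc 0 T))
    (hg_nonneg : ∀ e, ∀ᵐ t ∂(volume.restrict (Set.Icc (0:ℝ) T)), 0 ≤ g e t)
    (hcons : ∀ v : V, v ≠ d → ∀ S : Set ℝ, MeasurableSet S →
      nodeBalance T src tgt Te g v S = 0)
    (hdest : ∀ S : Set ℝ, MeasurableSet S → nodeBalance T src tgt Te g d S ≤ 0) :
    (∀ S : Set ℝ, MeasurableSet S → nodeBalance T src tgt Te g d S = 0)
    ∧ ∀ e, ∀ᵐ t ∂(volume.restrict (Set.Icc (0:ℝ) T)), t < Te e t → g e t = 0 := by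
  set μ := volume.restrict (Set.Icc (0:ℝ) T) with hμ
  have hint : ∀ e (S : Set ℝ), IntegrableOn (g e) S μ := by
    intro e S
    have h1 : Integrable (g e) μ := hg_int e
    exact h1.mono_measure (Measure.restrict_le_self (μ := μ) (s := S))
  -- the total balance over all nodes
  have hsum : ∀ S : Set ℝ,
      (∑ v : V, nodeBalance T src tgt Te g v S)
      = ∑ e : E, (∫ t in S, g e t ∂μ - ∫ t in Te e ⁻¹' S, g e t ∂μ) := by
    intro S
    simp only [nodeBalance, ← hμ]
    rw [Finset.sum_sub_distrib, Finset.sum_sub_distrib]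
    congr 1
    · rw [Finset.sum_comm]
      exact Finset.sum_congr rfl fun e _ => by simp
    · rw [Finset.sum_comm]
      exact Finset.sum_congr rfl fun e _ => by simp
  -- balance at d equals the sum over edges
  have hd_eq : ∀ S : Set ℝ, MeasurableSet S →
      nodeBalance T src tgt Te g d S
      = ∑ e : E, (∫ t in S, g e t ∂μ - ∫ t in Te e ⁻¹' S, g e t ∂μ) := by
    intro S hS
    rw [← hsum S]
    exact (Finset.sum_eq_single_of_mem d (Finset.mem_univ d)
      (fun v _ hv => hcons v hv S hS)).symm
  -- each difference is nonnegative on downward-closed sets Iic s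
  have hDnonneg : ∀ (e : E) (s : ℝ),
      0 ≤ ∫ t in Set.Iic s, g e t ∂μ - ∫ t in Te e ⁻¹' Set.Iic s, g e t ∂μ := by
    intro e s
    have hsub : Te e ⁻¹' Set.Iic s ⊆ Set.Iic s := fun t ht =>
      le_trans (hTe_ge e t) ht
    have := setIntegral_mono_set (μ := μ) (hint e (Set.Iic s))
      (ae_restrict_of_ae (hg_nonneg e)) (HasSubset.Subset.eventuallyLE hsub)
    linarith
  -- hence all differences vanish on Iic s
  have hDzero : ∀ (e : E) (s : ℝ),
      (∫ t in Set.Iic s, g e t ∂μ - ∫ t in Te e ⁻¹' Set.Iic s, g e t ∂μ) = 0 := by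
    intro e s
    have hmeas : MeasurableSet (Set.Iic s) := measurableSet_Iic
    have hle := hdest (Set.Iic s) hmeas
    rw [hd_eq (Set.Iic s) hmeas] at hle
    have hge : 0 ≤ ∑ e : E, (∫ t in Set.Iic s, g e t ∂μ - ∫ t in Te e ⁻¹' Set.Iic s, g e t ∂μ) :=
      Finset.sum_nonneg (fun e _ => hDnonneg e s)
    have hzero : ∑ e : E, (∫ t in Set.Iic s, g e t ∂μ - ∫ t in Te e ⁻¹' Set.Iic s, g e t ∂μ) = 0 :=
      le_antisymm hle hge
    exact (Finset.sum_eq_zero_iff_of_nonneg (fun e _ => hDnonneg e s)).mp hzero e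
      (Finset.mem_univ e)
  -- a.e. vanishing of g on {t < Te t}
  have hae : ∀ e, ∀ᵐ t ∂μ, t < Te e t → g e t = 0 := by
    intro e
    have key : ∀ q : ℚ, ∀ᵐ t ∂μ,
        t ∈ Set.Iic (q : ℝ) \ Te e ⁻¹' Set.Iic (q : ℝ) → g e t = 0 := by
      intro q
      set S := Set.Iic ((q : ℝ)) with hS
      have hSm : MeasurableSet S := measurableSet_Iic
      have hAm : MeasurableSet (Te e ⁻¹' S) := hTe_meas e hSm
      have hsub : Te e ⁻¹' S ⊆ S := fun t ht => le_trans (hTe_ge e t) ht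
      have hdiff : ∫ t in S \ Te e ⁻¹' S, g e t ∂μ = 0 := by
        rw [integral_diff hAm (hint e S) hsub]
        exact hDzero e q
      have hz : g e =ᵐ[μ.restrict (S \ Te e ⁻¹' S)] 0 := by
        rw [← integral_eq_zero_iff_of_nonneg_ae
          (ae_restrict_of_ae (hg_nonneg e)) (hint e _)]
        exact hdiff
      have := (ae_restrict_iff' (hSm.diff hAm)).mp hz
      filter_upwards [this] with t ht htmem using ht htmem
    have := ae_all_iff.mpr key
    filter_upwards [this] with t ht hlt
    obtain ⟨q, hq1, hq2⟩ := exists_rat_btwn hlt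
    exact ht q ⟨le_of_lt hq1, not_le.mpr hq2⟩
  -- pushforward integrals coincide
  have hpush : ∀ e (S : Set ℝ), MeasurableSet S →
      ∫ t in Te e ⁻¹' S, g e t ∂μ = ∫ t in S, g e t ∂μ := by
    intro e S hS
    rw [← integral_indicator (hTe_meas e hS), ← integral_indicator hS]
    apply integral_congr_ae
    filter_upwards [hae e] with t ht
    rcases eq_or_lt_of_le (hTe_ge e t) with h | h
    · have hmem : t ∈ Te e ⁻¹' S ↔ t ∈ S := by
        simp [Set.mem_preimage, ← h]
      by_cases hts : t ∈ S
      · simp [Set.indicator, hmem, hts]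
      · simp [Set.indicator, hmem, hts]
    · have hg0 : g e t = 0 := ht h
      simp [Set.indicator, hg0]
  constructor
  · intro S hS
    rw [hd_eq S hS]
    apply Finset.sum_eq_zero
    intro e _
    rw [hpush e S hS, sub_self]
  · exact hae
end

section
/- Let T_e : [0,T] → [0,T] be monotone nondecreasing and measurable with T_e(t) ≥ t, and let g_e ∈ L¹([0,T]) be nonnegative and admit an outflow rate g_e⁻ ∈ L¹([0,T]), i.e. ∫_𝔗 g_e⁻ dσ = ∫_{T_e⁻¹(𝔗)} g_e dσ for all Borel 𝔗. Then g_e⁻(t) = g_e(t) for almost all t in the set {t ∈ [0,T] : T_e(t) = t}. -/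
open MeasureTheory Set

/-- If the edge outflow rate `g⁻` of an edge inflow rate `g` exists
(i.e. `∫_S g⁻ dσ = ∫_{T_e⁻¹(S)} g dσ` for all Borel `S`), then `g⁻(t) = g(t)` for almost
all `t` in the set where the traversal time is zero, i.e. where `T_e(t) = t`. -/
theorem outflow_eq_inflow_on_zero_traversal (T : ℝ) (hT : 0 < T)
    (Te g gout : ℝ → ℝ)
    (hTe_mono : MonotoneOn Te (Set.Icc 0 T))
    (hTe_meas : Measurable Te)
    (hTe_maps : Set.MapsTo Te (Set.Icc 0 T) (Set.Icc 0 T))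
    (hTe_ge : ∀ t, t ≤ Te t)
    (hg_int : IntegrableOn g (Set.Icc 0 T))
    (hg_nonneg : ∀ᵐ t ∂(volume.restrict (Set.Icc (0:ℝ) T)), 0 ≤ g t)
    (hgout_int : IntegrableOn gout (Set.Icc 0 T))
    (hout : ∀ S : Set ℝ, MeasurableSet S →
      ∫ t in S, gout t ∂(volume.restrict (Set.Icc (0:ℝ) T)) =
        ∫ t in Te ⁻¹' S, g t ∂(volume.restrict (Set.Icc (0:ℝ) T))) :
    ∀ᵐ t ∂(volume.restrict (Set.Icc (0:ℝ) T)), Te t = t → gout t = g t := by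
  set μ₀ := volume.restrict (Set.Icc (0:ℝ) T) with hμ₀
  -- g vanishes a.e. on every fiber of Te
  have fiber : ∀ s : ℝ, ∀ᵐ t ∂μ₀, Te t = s → g t = 0 := by
    intro s
    have hnull : μ₀ {s} = 0 := by
      rw [hμ₀, Measure.restrict_apply (measurableSet_singleton s)]
      exact measure_mono_null Set.inter_subset_left (measure_singleton s)
    have h0 : ∫ t in Te ⁻¹' {s}, g t ∂μ₀ = 0 := by
      rw [← hout {s} (measurableSet_singleton s),
        Measure.restrict_eq_zero.mpr hnull, integral_zero_measure]
    have hmeas : MeasurableSet (Te ⁻¹' {s}) := hTe_meas (measurableSet_singleton s)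
    have hnn : 0 ≤ᵐ[μ₀.restrict (Te ⁻¹' {s})] g := ae_restrict_of_ae hg_nonneg
    have := (setIntegral_eq_zero_iff_of_nonneg_ae hnn (Integrable.restrict hg_int)).mp h0
    have := (ae_restrict_iff' hmeas).mp this
    filter_upwards [this] with t ht hts
    exact ht (by simpa using hts)
  -- g vanishes a.e. where Te t > t and Te t is a fixed point
  have hG : ∀ᵐ t ∂μ₀, (Te t ≠ t ∧ Te (Te t) = Te t) → g t = 0 := by
    have hall : ∀ᵐ t ∂μ₀, ∀ q : ℚ, Te t = Te (q : ℝ) → g t = 0 :=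
      (ae_all_iff).mpr fun q => fiber (Te (q : ℝ))
    filter_upwards [hall, ae_restrict_mem measurableSet_Icc] with t hq ht hcond
    obtain ⟨hne, hfix⟩ := hcond
    have hlt : t < Te t := lt_of_le_of_ne (hTe_ge t) (Ne.symm hne)
    obtain ⟨q, hq1, hq2⟩ := exists_rat_btwn hlt
    have hTt : Te t ∈ Set.Icc (0:ℝ) T := hTe_maps ht
    have hqmem : (q : ℝ) ∈ Set.Icc (0:ℝ) T :=
      ⟨le_trans ht.1 hq1.le, le_trans hq2.le hTt.2⟩
    have h1 : Te t ≤ Te (q:ℝ) := hTe_mono ht hqmem hq1.le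
    have h2 : Te (q:ℝ) ≤ Te t := by
      have := hTe_mono hqmem hTt hq2.le
      rwa [hfix] at this
    exact hq q (le_antisymm h2 h1).symm
  -- main argument on the fixed-point set
  have hF : MeasurableSet {t : ℝ | Te t = t} :=
    measurableSet_eq_fun hTe_meas measurable_id
  set F := {t : ℝ | Te t = t} with hFdef
  haveI : IsFiniteMeasure (μ₀.restrict F) := by
    constructor
    calc (μ₀.restrict F) Set.univ ≤ μ₀ Set.univ := Measure.restrict_le_self _
      _ ≤ volume (Set.Icc (0:ℝ) T) := by simp [hμ₀]
      _ < ⊤ := by simp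
  have key : gout =ᵐ[μ₀.restrict F] g := by
    apply ae_eq_of_forall_setIntegral_eq_of_sigmaFinite
    · intro s hs _; exact Integrable.restrict (Integrable.restrict hgout_int)
    · intro s hs _; exact Integrable.restrict (Integrable.restrict hg_int)
    · intro s hs _
      rw [Measure.restrict_restrict hs]
      set S := s ∩ F with hSdef
      have hSmeas : MeasurableSet S := hs.inter hF
      have hSfix : ∀ t ∈ S, Te t = t := fun t ht => ht.2
      have hsub : S ⊆ Te ⁻¹' S := fun t ht => by
        simp only [Set.mem_preimage, hSfix t ht]; exact ht
      have hUnion : Te ⁻¹' S = S ∪ (Te ⁻¹' S \ S) := (Set.union_diff_cancel hsub).symm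
      have hDmeas : MeasurableSet (Te ⁻¹' S \ S) := (hTe_meas hSmeas).diff hSmeas
      rw [hout S hSmeas, hUnion,
        setIntegral_union disjoint_sdiff_self_right hDmeas (Integrable.restrict hg_int) (Integrable.restrict hg_int)]
      have hzero : ∫ t in (Te ⁻¹' S \ S), g t ∂μ₀ = 0 := by
        have : ∀ᵐ t ∂μ₀, t ∈ (Te ⁻¹' S \ S) → g t = 0 := by
          filter_upwards [hG] with t ht htD
          apply ht
          obtain ⟨htS, htnS⟩ := htD
          have h1 : Te (Te t) = Te t := hSfix _ htS
          refine ⟨fun heq => htnS ?_, h1⟩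
          rw [← heq]; exact htS
        calc ∫ t in (Te ⁻¹' S \ S), g t ∂μ₀ = ∫ t in (Te ⁻¹' S \ S), (0:ℝ) ∂μ₀ :=
              setIntegral_congr_ae hDmeas this
          _ = 0 := by simp
      rw [hzero, add_zero]
  exact (ae_restrict_iff' hF).mp key
end

section
/- Let A : [0,T] → [0,T] be absolutely continuous and monotone nondecreasing, let h ∈ L¹([0,T]) admit a pushforward density ℓ(h) under A, and let 𝔇 ⊆ [0,T] be a Borel set with h(t) > 0 for a.e. t ∈ 𝔇. If moreover h = 0 a.e. on [0,T] \ 𝔇 and A(t) = t for a.e. t ∈ 𝔇 (i.e. A acts as the identity on the support of h), then ℓ(h) = h in L¹([0,T]). -/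
open MeasureTheory Set

/-- `ℓ` is a density (with respect to Lebesgue measure on `[0,T]`) of the pushforward of
`h·σ` under `A`. -/
def IsPushforwardDensity (T : ℝ) (A h ℓ : ℝ → ℝ) : Prop :=
  ∀ S : Set ℝ, MeasurableSet S →
    ∫ t in S, ℓ t ∂(volume.restrict (Set.Icc (0:ℝ) T)) =
      ∫ t in A ⁻¹' S, h t ∂(volume.restrict (Set.Icc (0:ℝ) T))

/-- If `A` is absolutely continuous (here: continuous with Lusin
property (N)) and monotone, `h` admits a pushforward density `ℓ` under `A`, `h > 0`
a.e. on a Borel set `𝔇`, `h = 0` a.e. off `𝔇`, and `A` is the identity a.e. on `𝔇`,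
then `ℓ = h` in `L¹([0,T])`. -/
theorem pushforward_density_eq_of_identity_on_support (T : ℝ) (hT : 0 < T)
    (A h ℓ : ℝ → ℝ)
    (hcont : ContinuousOn A (Set.Icc 0 T))
    (hmono : MonotoneOn A (Set.Icc 0 T))
    (hAmeas : Measurable A)
    (hmaps : Set.MapsTo A (Set.Icc 0 T) (Set.Icc 0 T))
    (hLusin : ∀ N ⊆ Set.Icc (0:ℝ) T, volume N = 0 → volume (A '' N) = 0)
    (hint : IntegrableOn h (Set.Icc 0 T))
    (hℓint : IntegrableOn ℓ (Set.Icc 0 T))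
    (hd : IsPushforwardDensity T A h ℓ)
    (𝔇 : Set ℝ) (h𝔇meas : MeasurableSet 𝔇)
    (hpos : ∀ᵐ t ∂((volume.restrict (Set.Icc (0:ℝ) T)).restrict 𝔇), 0 < h t)
    (hzero : ∀ᵐ t ∂((volume.restrict (Set.Icc (0:ℝ) T)).restrict 𝔇ᶜ), h t = 0)
    (hid : ∀ᵐ t ∂((volume.restrict (Set.Icc (0:ℝ) T)).restrict 𝔇), A t = t) :
    ℓ =ᵐ[volume.restrict (Set.Icc (0:ℝ) T)] h := by
  set μ := volume.restrict (Set.Icc (0:ℝ) T) with hμ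
  -- h equals its restriction to 𝔇 a.e.
  have hzero' : ∀ᵐ t ∂μ, t ∈ 𝔇ᶜ → h t = 0 :=
    (ae_restrict_iff' h𝔇meas.compl).mp hzero
  have hid' : ∀ᵐ t ∂μ, t ∈ 𝔇 → A t = t := (ae_restrict_iff' h𝔇meas).mp hid
  have hind : h =ᵐ[μ] 𝔇.indicator h := by
    filter_upwards [hzero'] with t ht
    by_cases h𝔇 : t ∈ 𝔇
    · simp [h𝔇]
    · simp [h𝔇, ht h𝔇]
  -- key: for every measurable set, integral over it of B of h equals integral over B∩𝔇
  have key : ∀ B : Set ℝ, MeasurableSet B →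
      ∫ t in B, h t ∂μ = ∫ t in B ∩ 𝔇, h t ∂μ := by
    intro B hB
    calc ∫ t in B, h t ∂μ = ∫ t in B, 𝔇.indicator h t ∂μ :=
          integral_congr_ae (ae_restrict_of_ae hind)
      _ = ∫ t in B ∩ 𝔇, h t ∂μ := by
          rw [setIntegral_indicator h𝔇meas]
  apply Integrable.ae_eq_of_forall_setIntegral_eq (μ := μ) ℓ h hℓint hint
  intro S hS _
  rw [hd S hS, key _ (hAmeas hS), key _ hS]
  apply setIntegral_congr_set
  filter_upwards [hid'] with t ht
  show (t ∈ A ⁻¹' S ∩ 𝔇) = (t ∈ S ∩ 𝔇)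
  rw [eq_iff_iff]
  constructor
  · rintro ⟨htS, ht𝔇⟩
    exact ⟨by rwa [← ht ht𝔇], ht𝔇⟩
  · rintro ⟨htS, ht𝔇⟩
    exact ⟨by simp [Set.mem_preimage, ht ht𝔇, htS], ht𝔇⟩
end
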